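/- arXiv:1804.02997 — 4 statements merged into one kernel-verified Lean document; each statement's English description precedes it below -/
import Mathlib

section
/- For x = Σ_{n∈ℤ} α_n T^n a in A_a, the generalized sample L_j x(rm) := ⟨x, (T*)^{-rm} b_j⟩_H equals ⟨F, g_j(w) e^{2πirmw}⟩_{L²(0,1)}, where F(w) = Σ_n α_n e^{2πinw} and g_j(w) = Σ_{k∈ℤ} ⟨(T*)^k b_j, a⟩_H e^{2πikw}. -/
/-!
Pairing with `v = (T*)^{-rm} b_j` is a continuous linear functional, so it can be applied term by
term to the series for `x`; moving `Tⁿ` across the inner product as `(T*)ⁿ` turns the `n`-th term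
`⟪v, Tⁿ a⟫` into `conj ⟪a, (T*)^{n-rm} b_j⟫`.
-/

open scoped InnerProductSpace ComplexInnerProductSpace ComplexConjugate

section AdjointPair

variable {𝕜 E : Type*} [RCLike 𝕜] [NormedAddCommGroup E] [InnerProductSpace 𝕜 E]
  {T S : E ≃L[𝕜] E}

theorem inner_inv_apply_left (h : ∀ x y : E, ⟪T x, y⟫_𝕜 = ⟪x, S y⟫_𝕜) (x y : E) :
    ⟪T⁻¹ x, y⟫_𝕜 = ⟪x, S⁻¹ y⟫_𝕜 := by
  show ⟪T.symm x, y⟫_𝕜 = ⟪x, S.symm y⟫_𝕜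
  simpa using (h (T.symm x) (S.symm y)).symm

theorem inner_zpow_apply_left (h : ∀ x y : E, ⟪T x, y⟫_𝕜 = ⟪x, S y⟫_𝕜) (n : ℤ) (x y : E) :
    ⟪(T ^ n) x, y⟫_𝕜 = ⟪x, (S ^ n) y⟫_𝕜 := by
  induction n using Int.induction_on generalizing x y with
  | zero => rfl
  | succ n ih =>
    rw [zpow_add_one, add_comm, zpow_one_add]
    exact (ih (T x) y).trans (h x _)
  | pred n ih =>
    rw [zpow_sub_one, sub_eq_neg_add, zpow_add, zpow_neg_one]
    exact (ih _ y).trans (inner_inv_apply_left h x _)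

end AdjointPair

theorem stmt_1_general {H : Type*} [NormedAddCommGroup H] [InnerProductSpace ℂ H]
    (T S : H ≃L[ℂ] H)
    (hS : ∀ x y : H, ⟪T x, y⟫ = ⟪x, S y⟫)
    (a : H)
    (s : ℕ) (b : Fin s → H) (r : ℕ)
    (α : ℤ → ℂ) (x : H) (hx : HasSum (fun n : ℤ => α n • ((T ^ n) a)) x)
    (j : Fin s) (m : ℤ) :
    -- `𝓛_j x(rm) = ⟨F, g_j e^{2πirmw}⟩_{L²(0,1)} = ∑ₙ αₙ · conj ⟨(T*)^{n-rm} b_j, a⟩`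
    HasSum (fun n : ℤ => α n * conj ⟪a, (S ^ (n - r * m)) (b j)⟫)
      ⟪(S ^ (-(r * m : ℤ))) (b j), x⟫ := by
  set v := (S ^ (-(r * m : ℤ))) (b j)
  have sample : ∀ n : ℤ, ⟪v, (T ^ n) a⟫ = conj ⟪a, (S ^ (n - r * m)) (b j)⟫ := fun n => by
    rw [← inner_conj_symm, inner_zpow_apply_left hS, sub_eq_add_neg, zpow_add]
    rfl
  simpa [inner_smul_right, sample] using hx.mapL (innerSL ℂ v)

/-- For `x = ∑ₙ αₙ Tⁿ a ∈ 𝒜_a`, the generalized sample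
`𝓛_j x(rm) := ⟨x, (T*)^{-rm} b_j⟩_H` equals `⟨F, g_j(w) e^{2πirmw}⟩_{L²(0,1)}`, where
`F(w) = ∑ₙ αₙ e^{2πinw}` and `g_j(w) = ∑ₖ ⟨(T*)ᵏ b_j, a⟩ e^{2πikw}`.  By Parseval this
inner product is the sum `∑ₙ αₙ conj⟨(T*)^{n-rm} b_j, a⟩`; everything is phrased in the
mathematician's convention `⟨u,v⟩ = ⟪v,u⟫_ℂ` (Mathlib's inner product is conjugate-linear
in its first slot).  `S` denotes the (invertible) adjoint `T*` of `T`. -/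
theorem stmt_1 {H : Type*} [NormedAddCommGroup H] [InnerProductSpace ℂ H] [CompleteSpace H]
    (T S : H ≃L[ℂ] H)
    (hS : ∀ x y : H, ⟪T x, y⟫ = ⟪x, S y⟫)
    (a : H)
    -- `{Tⁿ a}ₙ` is a Riesz sequence in `H`
    (hRiesz : ∃ A B : ℝ, 0 < A ∧ 0 < B ∧ ∀ (α : lp (fun _ : ℤ => ℂ) 2) (x : H),
      HasSum (fun n : ℤ => α n • ((T ^ n) a)) x →
        A * ‖α‖ ^ 2 ≤ ‖x‖ ^ 2 ∧ ‖x‖ ^ 2 ≤ B * ‖α‖ ^ 2)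
    (s : ℕ) (b : Fin s → H) (r : ℕ) (hr : 1 ≤ r)
    (α : ℤ → ℂ) (x : H) (hx : HasSum (fun n : ℤ => α n • ((T ^ n) a)) x)
    (j : Fin s) (m : ℤ) :
    -- `𝓛_j x(rm) = ⟨F, g_j e^{2πirmw}⟩_{L²(0,1)} = ∑ₙ αₙ · conj ⟨(T*)^{n-rm} b_j, a⟩`
    HasSum (fun n : ℤ => α n * conj ⟪a, (S ^ (n - r * m)) (b j)⟫)
      ⟪(S ^ (-(r * m : ℤ))) (b j), x⟫ :=
  stmt_1_general T S hS a s b r α x hx j m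
end

section
/- Suppose h_j, g_j ∈ ℓ¹(ℤ) for j=1,...,s. The analysis–synthesis filter bank with downsampling r gives perfect reconstruction, i.e., α_n = Σ_{j=1}^s Σ_{m∈ℤ} (α ∗ h_j)(rm) g_j(n − rm) for all α ∈ ℓ²(ℤ) and n ∈ ℤ, if and only if the sequences {conj(h_j)(rm − ·)}_{m∈ℤ, j=1..s} and {g_j(· − rm)}_{m∈ℤ, j=1..s} form a pair of dual frames in ℓ²(ℤ). -/
open scoped ComplexInnerProductSpace ComplexConjugate

/-! Since `⟪u_{j,m}, α⟫ = (α ∗ h_j)(rm)`, the `n`-th coordinate of `∑ ⟪u_{j,m}, α⟫ v_{j,m}` is the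
filter bank output at `n`. Evaluation at `n` is continuous on `ℓ²(ℤ)`, so dual frames give perfect
reconstruction. Conversely, perfect reconstruction pins down the coordinates of the series, and it
only remains to see that the series converges in `ℓ²(ℤ)`. Both families are `rℤ`-shifts of `ℓ¹`
filters `f_j`, and weighted Cauchy–Schwarz gives the synthesis bound
`‖∑ d_{j,m} w_{j,m}‖² ≤ (∑_j ‖f_j‖₁)² ∑ |d_{j,m}|²`. For `u` it makes the coefficients
`⟪u_{j,m}, α⟫` square summable (by duality), and then for `v` it makes the series Cauchy. -/

theorem summable_of_sq_norm_sum_le {κ E : Type*} [NormedAddCommGroup E] [CompleteSpace E]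
    {f : κ → E} {w : κ → ℝ} (hw : Summable w) (h : ∀ t, ‖∑ i ∈ t, f i‖ ^ 2 ≤ ∑ i ∈ t, w i) :
    Summable f := by
  refine summable_iff_vanishing_norm.2 fun ε hε => ?_
  obtain ⟨s, hs⟩ := summable_iff_vanishing_norm.1 hw (ε ^ 2) (by positivity)
  refine ⟨s, fun t ht => ?_⟩
  have : ‖∑ i ∈ t, f i‖ ^ 2 < ε ^ 2 := (h t).trans_lt ((le_abs_self _).trans_lt (hs t ht))
  exact lt_of_pow_lt_pow_left₀ 2 hε.le this

theorem lp.norm_sq_le_of_forall_sum_sq_le {α : Type*} {E : α → Type*}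
    [∀ i, NormedAddCommGroup (E i)] {x : lp E 2} {C : ℝ}
    (h : ∀ s : Finset α, ∑ i ∈ s, ‖x i‖ ^ 2 ≤ C) : ‖x‖ ^ 2 ≤ C := by
  have hC : 0 ≤ C := by simpa using h ∅
  have hx : ‖x‖ ≤ √C := lp.norm_le_of_forall_sum_le (by norm_num) (Real.sqrt_nonneg C)
    fun s => by simpa [Real.sq_sqrt hC] using h s
  calc ‖x‖ ^ 2 ≤ √C ^ 2 := pow_le_pow_left₀ (norm_nonneg x) hx 2
    _ = C := Real.sq_sqrt hC

section Synthesis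

variable (𝕜 : Type*) {E κ : Type*} [RCLike 𝕜] [NormedAddCommGroup E]

/-- The synthesis-operator form of a Bessel bound `B` for the family `W`. -/
def SynthesisBounded [NormedSpace 𝕜 E] (W : κ → E) (B : ℝ) : Prop :=
  ∀ (d : κ → 𝕜) (t : Finset κ), ‖∑ p ∈ t, d p • W p‖ ^ 2 ≤ B * ∑ p ∈ t, ‖d p‖ ^ 2

variable {𝕜}

theorem SynthesisBounded.summable_smul [NormedSpace 𝕜 E] [CompleteSpace E]
    {W : κ → E} {B : ℝ} (hW : SynthesisBounded 𝕜 W B) {c : κ → 𝕜}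
    (hc : Summable fun p => ‖c p‖ ^ 2) : Summable fun p => c p • W p :=
  summable_of_sq_norm_sum_le (hc.mul_left B) fun t => (hW c t).trans_eq (Finset.mul_sum ..)

theorem SynthesisBounded.summable_sq_norm_inner [InnerProductSpace 𝕜 E]
    {W : κ → E} {B : ℝ} (hW : SynthesisBounded 𝕜 W B) (x : E) :
    Summable fun p => ‖inner 𝕜 (W p) x‖ ^ 2 := by
  refine summable_of_sum_le (c := |B| * ‖x‖ ^ 2) (fun p => sq_nonneg _) fun t => ?_
  set S := ∑ p ∈ t, ‖inner 𝕜 (W p) x‖ ^ 2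
  set y := ∑ p ∈ t, inner 𝕜 (W p) x • W p
  have hS : 0 ≤ S := Finset.sum_nonneg fun p _ => sq_nonneg _
  have hyx : S ≤ ‖y‖ * ‖x‖ := by
    have hinner : inner 𝕜 y x = (S : 𝕜) := by
      simp only [y, S, sum_inner, inner_smul_left, RCLike.conj_mul, RCLike.ofReal_sum,
        RCLike.ofReal_pow]
    calc S = ‖inner 𝕜 y x‖ := by rw [hinner, RCLike.norm_ofReal, abs_of_nonneg hS]
      _ ≤ ‖y‖ * ‖x‖ := norm_inner_le_norm y x
  have hy : ‖y‖ ^ 2 ≤ |B| * S := (hW _ t).trans (mul_le_mul_of_nonneg_right (le_abs_self B) hS)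
  rcases hS.eq_or_lt with h0 | hpos
  · rw [← h0]; positivity
  · have : S ^ 2 ≤ |B| * S * ‖x‖ ^ 2 := by
      calc S ^ 2 ≤ (‖y‖ * ‖x‖) ^ 2 := pow_le_pow_left₀ hS hyx 2
        _ = ‖y‖ ^ 2 * ‖x‖ ^ 2 := mul_pow _ _ 2
        _ ≤ |B| * S * ‖x‖ ^ 2 := mul_le_mul_of_nonneg_right hy (sq_nonneg _)
    nlinarith

end Synthesis

theorem sum_comp_le_tsum_of_injective {α β : Type*} {f : α → ℝ} (hf : Summable f)
    (hn : ∀ a, 0 ≤ f a) {i : β → α} (hi : Function.Injective i) (T : Finset β) :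
    ∑ b ∈ T, f (i b) ≤ ∑' a, f a := by
  simpa using hf.sum_le_tsum (T.map ⟨i, hi⟩) fun a _ => hn a

section Shifts

variable {𝕜 ι : Type*} [RCLike 𝕜] [Fintype ι] {f : ι → ℤ → 𝕜} {r : ℤ}

theorem sum_norm_shift_le_tsum (hf : ∀ j, Summable fun n => ‖f j n‖) (hr : r ≠ 0)
    (n : ℤ) (t : Finset (ι × ℤ)) :
    ∑ p ∈ t, ‖f p.1 (n - r * p.2)‖ ≤ ∑ j, ∑' l, ‖f j l‖ := by
  have hinj : Function.Injective fun m : ℤ => n - r * m := fun a b hab =>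
    mul_left_cancel₀ hr (sub_right_injective hab)
  calc ∑ p ∈ t, ‖f p.1 (n - r * p.2)‖
      ≤ ∑ p ∈ Finset.univ ×ˢ t.image Prod.snd, ‖f p.1 (n - r * p.2)‖ :=
        Finset.sum_le_sum_of_subset_of_nonneg
          (fun p hp => Finset.mem_product.2 ⟨Finset.mem_univ _, Finset.mem_image_of_mem _ hp⟩)
          fun _ _ _ => norm_nonneg _
    _ = ∑ j, ∑ m ∈ t.image Prod.snd, ‖f j (n - r * m)‖ := Finset.sum_product ..
    _ ≤ ∑ j, ∑' l, ‖f j l‖ := Finset.sum_le_sum fun j _ =>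
        sum_comp_le_tsum_of_injective (hf j) (fun _ => norm_nonneg _) hinj _

theorem synthesisBounded_shift (hf : ∀ j, Summable fun n => ‖f j n‖) (hr : r ≠ 0)
    {W : ι × ℤ → lp (fun _ : ℤ => 𝕜) 2} (hW : ∀ p n, W p n = f p.1 (n - r * p.2)) :
    SynthesisBounded 𝕜 W ((∑ j, ∑' l, ‖f j l‖) ^ 2) := by
  intro d t
  set F := ∑ j, ∑' l, ‖f j l‖
  set a : ι × ℤ → ℤ → ℝ := fun p n => ‖f p.1 (n - r * p.2)‖
  have hrow : ∀ n, ∑ p ∈ t, a p n ≤ F := fun n => sum_norm_shift_le_tsum hf hr n t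
  have hcol : ∀ p (S : Finset ℤ), ∑ n ∈ S, a p n ≤ F := fun p S => by
    have hinj : Function.Injective fun n : ℤ => n - r * p.2 := sub_left_injective
    calc ∑ n ∈ S, a p n ≤ ∑' l, ‖f p.1 l‖ :=
          sum_comp_le_tsum_of_injective (hf p.1) (fun _ => norm_nonneg _) hinj S
      _ ≤ F := Finset.single_le_sum (f := fun j => ∑' l, ‖f j l‖)
          (fun j _ => tsum_nonneg fun _ => norm_nonneg _) (Finset.mem_univ p.1)
  have hpt : ∀ n, ‖(∑ p ∈ t, d p • W p) n‖ ^ 2 ≤ F * ∑ p ∈ t, a p n * ‖d p‖ ^ 2 := fun n => by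
    have hle : ‖(∑ p ∈ t, d p • W p) n‖ ≤ ∑ p ∈ t, a p n * ‖d p‖ := by
      rw [lp.coeFn_sum, Finset.sum_apply]
      refine (norm_sum_le _ _).trans_eq (Finset.sum_congr rfl fun p _ => ?_)
      rw [lp.coeFn_smul, Pi.smul_apply, hW, norm_smul, mul_comm]
    calc ‖(∑ p ∈ t, d p • W p) n‖ ^ 2 ≤ (∑ p ∈ t, a p n * ‖d p‖) ^ 2 :=
          pow_le_pow_left₀ (norm_nonneg _) hle 2
      _ ≤ (∑ p ∈ t, a p n) * ∑ p ∈ t, a p n * ‖d p‖ ^ 2 :=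
          Finset.sum_sq_le_sum_mul_sum_of_sq_le_mul t (fun _ _ => norm_nonneg _)
            (fun _ _ => by positivity) fun p _ => le_of_eq (by ring)
      _ ≤ F * ∑ p ∈ t, a p n * ‖d p‖ ^ 2 :=
          mul_le_mul_of_nonneg_right (hrow n) (Finset.sum_nonneg fun _ _ => by positivity)
  refine lp.norm_sq_le_of_forall_sum_sq_le fun S => ?_
  calc ∑ n ∈ S, ‖(∑ p ∈ t, d p • W p) n‖ ^ 2
      ≤ ∑ n ∈ S, F * ∑ p ∈ t, a p n * ‖d p‖ ^ 2 := Finset.sum_le_sum fun n _ => hpt n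
    _ = F * ∑ p ∈ t, (∑ n ∈ S, a p n) * ‖d p‖ ^ 2 := by
        rw [← Finset.mul_sum, Finset.sum_comm]; simp only [Finset.sum_mul]
    _ ≤ F * ∑ p ∈ t, F * ‖d p‖ ^ 2 := by gcongr with p; exact hcol p S
    _ = F ^ 2 * ∑ p ∈ t, ‖d p‖ ^ 2 := by rw [← Finset.mul_sum]; ring

end Shifts

/-- Suppose `𝐡_j, 𝐠_j ∈ ℓ¹(ℤ)` for `j = 1,…,s`.  The analysis–synthesis
filter bank with downsampling `r` gives perfect reconstruction, i.e.
`αₙ = ∑_{j=1}^s ∑_{m∈ℤ} (α ∗ 𝐡_j)(rm) 𝐠_j(n − rm)` for all `α ∈ ℓ²(ℤ)` and `n ∈ ℤ`,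
iff the sequences `{conj 𝐡_j(rm − ·)}` and `{𝐠_j(· − rm)}` form a pair of dual frames in
`ℓ²(ℤ)`, i.e. `α = ∑_{j,m} ⟨α, u_{j,m}⟩ v_{j,m}` for all `α ∈ ℓ²(ℤ)` (the paper's inner
product `⟨u,v⟩`, linear in the first slot, is Mathlib's `⟪v,u⟫_ℂ`). -/
theorem stmt_8 (s : ℕ) (r : ℕ) (hr : 0 < r)
    (h g : Fin s → ℤ → ℂ)
    (hl1 : ∀ j, Summable fun n => ‖h j n‖) (gl1 : ∀ j, Summable fun n => ‖g j n‖)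
    -- `u_{j,m} = conj 𝐡_j(rm − ·)` and `v_{j,m} = 𝐠_j(· − rm)` as elements of `ℓ²(ℤ)`
    (U V : Fin s → ℤ → lp (fun _ : ℤ => ℂ) 2)
    (hU : ∀ j m n, U j m n = conj (h j ((r : ℤ) * m - n)))
    (hV : ∀ j m n, V j m n = g j (n - (r : ℤ) * m)) :
    -- perfect reconstruction
    (∀ (α : lp (fun _ : ℤ => ℂ) 2) (n : ℤ),
      HasSum (fun p : Fin s × ℤ =>
        (∑' k : ℤ, α k * h p.1 ((r : ℤ) * p.2 - k)) * g p.1 (n - (r : ℤ) * p.2)) (α n))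
    ↔
    -- dual frames in `ℓ²(ℤ)`
    (∀ α : lp (fun _ : ℤ => ℂ) 2,
      HasSum (fun p : Fin s × ℤ => ⟪U p.1 p.2, α⟫ • V p.1 p.2) α) := by
  have hr' : (r : ℤ) ≠ 0 := by exact_mod_cast hr.ne'
  have coord : ∀ (α : lp (fun _ : ℤ => ℂ) 2) (n : ℤ) (p : Fin s × ℤ),
      (⟪U p.1 p.2, α⟫ • V p.1 p.2) n
        = (∑' k : ℤ, α k * h p.1 ((r : ℤ) * p.2 - k)) * g p.1 (n - (r : ℤ) * p.2) := by
    intro α n p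
    rw [lp.coeFn_smul, Pi.smul_apply, smul_eq_mul, hV, lp.inner_eq_tsum]
    congr 1
    exact tsum_congr fun k => by rw [RCLike.inner_apply, hU, Complex.conj_conj, mul_comm]
  constructor
  · intro hPR α
    have hU_bdd := synthesisBounded_shift (f := fun j l => conj (h j (-l)))
      (fun j => by simpa [Function.comp_def] using (Equiv.neg ℤ).summable_iff.2 (hl1 j)) hr'
      (W := fun p => U p.1 p.2) fun p n => by rw [hU, neg_sub]
    have hV_bdd := synthesisBounded_shift gl1 hr' (W := fun p => V p.1 p.2)
      fun p n => hV p.1 p.2 n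
    obtain ⟨β, hβ⟩ := hV_bdd.summable_smul (hU_bdd.summable_sq_norm_inner α)
    have hβα : β = α := lp.ext <| funext fun n =>
      (((lp.evalCLM ℂ _ 2 n).hasSum hβ).congr_fun fun p => (coord α n p).symm).unique (hPR α n)
    exact hβα ▸ hβ
  · intro hDF α n
    exact ((lp.evalCLM ℂ _ 2 n).hasSum (hDF α)).congr_fun fun p => (coord α n p).symm
end

section
/- Let C be an sℓ×N complex matrix partitioned into s blocks of size ℓ×N, with N = rℓ. Each block of C is r-circulant (each row equals the previous row shifted r places to the right with wraparound) if and only if C = P* C P_N^r, where P_N is the N×N cyclic 1-shift matrix and P = diag(P_ℓ,...,P_ℓ) (s copies). Consequently, if C has this structure then so does (C†)ᵀ, where C† is the Moore–Penrose pseudo-inverse of C. -/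
open Matrix

/-- `B` is the Moore–Penrose pseudo-inverse of `A` (the four Penrose equations). -/
def IsMoorePenrose {m n : Type*} [Fintype m] [Fintype n]
    (A : Matrix m n ℂ) (B : Matrix n m ℂ) : Prop :=
  A * B * A = A ∧ B * A * B = B ∧ (A * B)ᴴ = A * B ∧ (B * A)ᴴ = B * A

/-!
The shift matrices are permutation matrices, so `A = Uᴴ * A * V` with `U`, `V` permutation
matrices says that `A` is fixed by permuting its rows and columns simultaneously; for the shifts
this is the block `r`-circulant condition. Conjugating the Penrose equations by unitaries shows
that `Vᴴ * A† * U` is a pseudo-inverse of `Uᴴ * A * V = A`, so `A† = Vᴴ * A† * U` by uniqueness,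
and swapping the roles of rows and columns gives the same invariance for `(A†)ᵀ` and `(A†)ᴴ`.
-/

namespace IsMoorePenrose

variable {m n : Type*} [Fintype m] [Fintype n] {A : Matrix m n ℂ}

theorem unique {B₁ B₂ : Matrix n m ℂ} (h₁ : IsMoorePenrose A B₁) (h₂ : IsMoorePenrose A B₂) :
    B₁ = B₂ := by
  obtain ⟨hABA₁, hBAB₁, hAB₁, hBA₁⟩ := h₁
  obtain ⟨hABA₂, hBAB₂, hAB₂, hBA₂⟩ := h₂
  have hAB : A * B₁ = A * B₂ :=
    calc A * B₁ = (A * B₁)ᴴ * (A * B₂)ᴴ := by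
          rw [← conjTranspose_mul, ← Matrix.mul_assoc, hABA₂, hAB₁]
      _ = A * B₂ := by rw [hAB₁, hAB₂, ← Matrix.mul_assoc, hABA₁]
  have hBA : B₁ * A = B₂ * A :=
    calc B₁ * A = (B₂ * A)ᴴ * (B₁ * A)ᴴ := by
          rw [← conjTranspose_mul, Matrix.mul_assoc, ← Matrix.mul_assoc A, hABA₂, hBA₁]
      _ = B₂ * A := by rw [hBA₁, hBA₂, Matrix.mul_assoc, ← Matrix.mul_assoc A, hABA₁]
  calc B₁ = B₁ * A * B₁ := hBAB₁.symm
    _ = B₂ * A * B₂ := by rw [Matrix.mul_assoc, hAB, ← Matrix.mul_assoc, hBA]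
    _ = B₂ := hBAB₂

theorem conjTranspose_mul_mul [DecidableEq m] [DecidableEq n] {B : Matrix n m ℂ}
    {U : Matrix m m ℂ} {V : Matrix n n ℂ} (hU : U * Uᴴ = 1) (hV : V * Vᴴ = 1)
    (hB : IsMoorePenrose A B) : IsMoorePenrose (Uᴴ * A * V) (Vᴴ * B * U) := by
  obtain ⟨hABA, hBAB, hAB, hBA⟩ := hB
  have hAB' : Uᴴ * A * V * (Vᴴ * B * U) = Uᴴ * (A * B) * U := by
    simp only [Matrix.mul_assoc, ← Matrix.mul_assoc V, hV, Matrix.one_mul]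
  have hBA' : Vᴴ * B * U * (Uᴴ * A * V) = Vᴴ * (B * A) * V := by
    simp only [Matrix.mul_assoc, ← Matrix.mul_assoc U, hU, Matrix.one_mul]
  refine ⟨?_, ?_, ?_, ?_⟩
  · rw [hAB']
    simp only [Matrix.mul_assoc, ← Matrix.mul_assoc U, hU, Matrix.one_mul]
    simp only [← Matrix.mul_assoc, hABA]
  · rw [hBA']
    simp only [Matrix.mul_assoc, ← Matrix.mul_assoc V, hV, Matrix.one_mul]
    simp only [← Matrix.mul_assoc, hBAB]
  · rw [hAB', conjTranspose_mul, conjTranspose_mul, conjTranspose_conjTranspose, hAB]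
    simp only [Matrix.mul_assoc]
  · rw [hBA', conjTranspose_mul, conjTranspose_mul, conjTranspose_conjTranspose, hBA]
    simp only [Matrix.mul_assoc]

theorem eq_conjTranspose_mul_mul [DecidableEq m] [DecidableEq n] {B : Matrix n m ℂ}
    {U : Matrix m m ℂ} {V : Matrix n n ℂ} (hU : U * Uᴴ = 1) (hV : V * Vᴴ = 1)
    (hA : A = Uᴴ * A * V) (hB : IsMoorePenrose A B) : B = Vᴴ * B * U :=
  hB.unique (hA ▸ hB.conjTranspose_mul_mul hU hV)

end IsMoorePenrose

namespace Matrix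

variable {m n R : Type*} [Fintype m] [Fintype n] [DecidableEq m] [DecidableEq n]

theorem permMatrix_pow [Semiring R] (σ : Equiv.Perm n) (k : ℕ) :
    (σ ^ k).permMatrix R = σ.permMatrix R ^ k := by
  induction k with
  | zero => simp
  | succ k ih => rw [pow_succ, permMatrix_mul, ih, pow_succ']

theorem permMatrix_mul_conjTranspose [NonAssocSemiring R] [StarRing R] (σ : Equiv.Perm n) :
    σ.permMatrix R * (σ.permMatrix R)ᴴ = 1 := by
  rw [conjTranspose_permMatrix, ← permMatrix_mul, inv_mul_cancel, permMatrix_one]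

theorem eq_conjTranspose_permMatrix_mul_mul_permMatrix_iff [NonAssocSemiring R] [StarRing R]
    (σ : Equiv.Perm m) (τ : Equiv.Perm n) (A : Matrix m n R) :
    A = (σ.permMatrix R)ᴴ * A * τ.permMatrix R ↔ ∀ i j, A (σ i) (τ j) = A i j := by
  rw [conjTranspose_permMatrix, PEquiv.toMatrix_toPEquiv_mul, PEquiv.mul_toMatrix_toPEquiv,
    ← Matrix.ext_iff]
  refine ⟨fun h i j => ?_, fun h i j => ?_⟩
  · simpa using h (σ i) (τ j)
  · simpa using h (σ.symm i) (τ.symm j)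

end Matrix

theorem stmt_12_general (s r ℓ N : ℕ) [NeZero ℓ] [NeZero N]
    (C : Matrix (Fin s × ZMod ℓ) (ZMod N) ℂ) :
    let PN : Matrix (ZMod N) (ZMod N) ℂ := Matrix.of fun i j => if j = i + 1 then 1 else 0
    let P : Matrix (Fin s × ZMod ℓ) (Fin s × ZMod ℓ) ℂ :=
      Matrix.of fun p q => if p.1 = q.1 ∧ q.2 = p.2 + 1 then 1 else 0
    ((∀ (j : Fin s) (n : ZMod ℓ) (k : ZMod N), C (j, n + 1) (k + (r : ZMod N)) = C (j, n) k)
        ↔ C = Pᴴ * C * PN ^ r) ∧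
    (C = Pᴴ * C * PN ^ r →
      ∀ B : Matrix (ZMod N) (Fin s × ZMod ℓ) ℂ, IsMoorePenrose C B →
        Bᵀ = Pᴴ * Bᵀ * PN ^ r ∧ Bᴴ = Pᴴ * Bᴴ * PN ^ r) := by
  intro PN P
  set σ : Equiv.Perm (Fin s × ZMod ℓ) := Equiv.prodCongr (Equiv.refl _) (Equiv.addRight 1)
  set τ : Equiv.Perm (ZMod N) := Equiv.addRight (r : ZMod N)
  have hP : P = σ.permMatrix ℂ := by
    ext p q
    simp [P, σ, PEquiv.toMatrix_apply, Prod.ext_iff, eq_comm]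
  have hPN : PN ^ r = τ.permMatrix ℂ := by
    have hPN₁ : PN = (Equiv.addRight (1 : ZMod N)).permMatrix ℂ := by
      ext i j
      simp [PN, PEquiv.toMatrix_apply, eq_comm]
    rw [hPN₁, ← permMatrix_pow]
    congr
    ext k
    simp [τ]
  rw [hP, hPN]
  refine ⟨?_, fun hC B hB => ?_⟩
  · rw [eq_conjTranspose_permMatrix_mul_mul_permMatrix_iff]
    simp [σ, τ, Prod.forall]
  have hB_inv := hB.eq_conjTranspose_mul_mul (permMatrix_mul_conjTranspose σ)
    (permMatrix_mul_conjTranspose τ) hC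
  simp only [eq_conjTranspose_permMatrix_mul_mul_permMatrix_iff] at hB_inv ⊢
  exact ⟨fun p k => hB_inv k p, fun p k => by simp [hB_inv k p]⟩

/-- Let `C` be an `sℓ×N` complex matrix (with `N = rℓ`) partitioned
into `s` blocks of size `ℓ×N`.  Each block is `r`-circulant (each row equals the
previous row shifted `r` places to the right with wraparound) iff `C = ℙ* C P_N^r`,
where `P_N` is the `N×N` cyclic `1`-shift matrix (first row `(0,1,0,…,0)`) and
`ℙ = diag(P_ℓ,…,P_ℓ)` (`s` copies).  Consequently, if `C` has this structure then so
do `(C†)ᵀ` and `(C†)*`, where `C†` is the Moore–Penrose pseudo-inverse of `C`.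
Row/column indices are taken in `ZMod ℓ` and `ZMod N` to encode the wraparound. -/
theorem stmt_12 (s r ℓ N : ℕ) [NeZero ℓ] [NeZero N] (hN : N = r * ℓ)
    (C : Matrix (Fin s × ZMod ℓ) (ZMod N) ℂ) :
    let PN : Matrix (ZMod N) (ZMod N) ℂ := Matrix.of fun i j => if j = i + 1 then 1 else 0
    let P : Matrix (Fin s × ZMod ℓ) (Fin s × ZMod ℓ) ℂ :=
      Matrix.of fun p q => if p.1 = q.1 ∧ q.2 = p.2 + 1 then 1 else 0
    ((∀ (j : Fin s) (n : ZMod ℓ) (k : ZMod N), C (j, n + 1) (k + (r : ZMod N)) = C (j, n) k)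
        ↔ C = Pᴴ * C * PN ^ r) ∧
    (C = Pᴴ * C * PN ^ r →
      ∀ B : Matrix (ZMod N) (Fin s × ZMod ℓ) ℂ, IsMoorePenrose C B →
        Bᵀ = Pᴴ * Bᵀ * PN ^ r ∧ Bᴴ = Pᴴ * Bᴴ * PN ^ r) :=
  stmt_12_general s r ℓ N C
end

section
/- In the critical case s = r (so sℓ = N), if the N×N matrix R_{a,b} is invertible then there exist unique c_j ∈ A_a, j=1,...,r, such that {T^{rn} c_j}_{j=1..r, n=0..ℓ−1} is a basis for A_a, the sampling expansion x = Σ_j Σ_n L_j x(rn) T^{rn} c_j holds for all x ∈ A_a, and the interpolation property L_{j'} c_j(rn) = δ_{j,j'} δ_{n,0} holds for all n = 0,...,ℓ−1 and j, j' = 1,...,r. -/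
/-!
Put `e k = T^k a` and `φ (j, n) = ⟪S^{-rn} b_j, ·⟫ = ⟪b_j, T^{-rn} ·⟫`. Since `k ↦ T^k a` is
`N`-periodic, `φ (j, n) (e k)` is the entry `R_{(j,n),k}`, so for `Q = R⁻¹` the vectors
`d p = ∑ k, Q k p • e k` are biorthogonal to the `φ`'s. Hence on `𝒜_a = span e` every `x` equals
`∑ p, φ p x • d p`, the `d p` form a basis, and they are the only family with these two properties.
As `T^N = T^{rℓ}` fixes `𝒜_a`, there `φ (j', n') (T^{rn} y) = φ (j', n' - n mod ℓ) y`, so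
`T^{rn} d (j, 0)` and `d (j, n)` have the same samples and coincide: `c_j = d (j, 0)`.
-/

open Submodule Set
open scoped ComplexInnerProductSpace

section Biorthogonal

variable {K V ι κ : Type*} [Field K] [AddCommGroup V] [Module K V] [Fintype ι]
  {e : ι → V} {φ : κ → V →ₗ[K] K} {R : Matrix κ ι K} {Q : Matrix ι κ K}

def biorthogonalFamily (e : ι → V) (Q : Matrix ι κ K) (p : κ) : V := ∑ k, Q k p • e k

lemma biorthogonalFamily_mem_span (p : κ) : biorthogonalFamily e Q p ∈ span K (range e) :=
  sum_mem fun k _ => smul_mem _ _ (subset_span ⟨k, rfl⟩)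

lemma apply_biorthogonalFamily [DecidableEq κ] (hR : ∀ q k, φ q (e k) = R q k)
    (hRQ : R * Q = 1) (q p : κ) : φ q (biorthogonalFamily e Q p) = if q = p then 1 else 0 := by
  calc φ q (biorthogonalFamily e Q p) = (R * Q) q p := by
        simp [biorthogonalFamily, hR, Matrix.mul_apply, mul_comm]
    _ = _ := by rw [hRQ, Matrix.one_apply]

lemma eq_sum_smul_biorthogonalFamily [Fintype κ] [DecidableEq ι] (hQR : Q * R = 1) (k : ι) :
    e k = ∑ p, R p k • biorthogonalFamily e Q p := by
  calc e k = ∑ k', (Q * R) k' k • e k' := by simp [hQR, Matrix.one_apply]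
    _ = _ := by
      simp only [biorthogonalFamily, Matrix.mul_apply, Finset.sum_smul, Finset.smul_sum, smul_smul]
      rw [Finset.sum_comm]
      simp [mul_comm]

lemma eq_sum_apply_smul_biorthogonalFamily [Fintype κ] [DecidableEq ι]
    (hR : ∀ q k, φ q (e k) = R q k) (hQR : Q * R = 1) {x : V} (hx : x ∈ span K (range e)) :
    x = ∑ p, φ p x • biorthogonalFamily e Q p := by
  let expand : V →ₗ[K] V := ∑ p, (φ p).smulRight (biorthogonalFamily e Q p)
  have hgen : EqOn (LinearMap.id : V →ₗ[K] V) expand (range e) := by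
    rintro - ⟨k, rfl⟩
    simpa [expand, hR] using eq_sum_smul_biorthogonalFamily hQR k
  simpa [expand] using LinearMap.eqOn_span hgen hx

lemma eq_of_forall_apply_eq [Fintype κ] [DecidableEq ι] (hR : ∀ q k, φ q (e k) = R q k)
    (hQR : Q * R = 1) {x y : V} (hx : x ∈ span K (range e)) (hy : y ∈ span K (range e))
    (h : ∀ p, φ p x = φ p y) : x = y := by
  rw [eq_sum_apply_smul_biorthogonalFamily hR hQR hx,
    eq_sum_apply_smul_biorthogonalFamily hR hQR hy]
  simp only [h]

lemma linearIndependent_of_apply_eq_ite [Fintype κ] [DecidableEq κ] {f : κ → V}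
    (hf : ∀ q p, φ q (f p) = if q = p then 1 else 0) : LinearIndependent K f := by
  refine Fintype.linearIndependent_iff.mpr fun g hg q => ?_
  simpa [hf] using congrArg (φ q) hg

lemma span_range_biorthogonalFamily [Fintype κ] [DecidableEq ι] (hR : ∀ q k, φ q (e k) = R q k)
    (hQR : Q * R = 1) : span K (range (biorthogonalFamily e Q)) = span K (range e) := by
  refine le_antisymm (span_le.mpr ?_) fun x hx => ?_
  · rintro - ⟨p, rfl⟩
    exact biorthogonalFamily_mem_span p
  · rw [eq_sum_apply_smul_biorthogonalFamily hR hQR hx]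
    exact sum_mem fun p _ => smul_mem _ _ (subset_span ⟨p, rfl⟩)

lemma eq_biorthogonalFamily [Fintype κ] [DecidableEq ι] [DecidableEq κ]
    (hR : ∀ q k, φ q (e k) = R q k) (hQR : Q * R = 1) {f : κ → V}
    (hmem : ∀ p, f p ∈ span K (range e)) (hf : LinearIndependent K f)
    (hexp : ∀ x ∈ span K (range e), x = ∑ p, φ p x • f p) : f = biorthogonalFamily e Q := by
  have hδ : ∀ p q, φ q (f p) = if q = p then 1 else 0 := by
    intro p
    refine Fintype.linearIndependent_iffₛ.mp hf _ _ ?_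
    rw [← hexp _ (hmem p)]
    simp
  funext p
  rw [eq_sum_apply_smul_biorthogonalFamily hR hQR (hmem p)]
  simp [hδ]

end Biorthogonal

namespace ContinuousLinearEquiv

variable {R M : Type*} [Semiring R] [TopologicalSpace M] [AddCommMonoid M] [Module R M]
  {T : M ≃L[R] M}

lemma zpow_add_apply (T : M ≃L[R] M) (m n : ℤ) (x : M) :
    (T ^ (m + n)) x = (T ^ m) ((T ^ n) x) := by
  rw [zpow_add]; rfl

lemma zpow_apply_of_apply_eq {x : M} (hx : T x = x) (m : ℤ) :
    (T ^ m) x = x := by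
  induction m using Int.induction_on with
  | zero => rfl
  | succ n ih => rw [T.zpow_add_apply, zpow_one, hx, ih]
  | pred n ih =>
    have hinv : T⁻¹ x = x := T.symm_apply_eq.mpr hx.symm
    rw [sub_eq_add_neg, T.zpow_add_apply, zpow_neg_one, hinv, ih]

lemma zpow_apply_eq_of_modEq {N : ℕ} {x : M} (hx : (T ^ N) x = x)
    {m m' : ℤ} (h : m ≡ m' [ZMOD N]) : (T ^ m) x = (T ^ m') x := by
  obtain ⟨q, hq⟩ := h.dvd
  rw [show m' = m + N * q by linarith, T.zpow_add_apply, zpow_mul, zpow_natCast,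
    zpow_apply_of_apply_eq hx]

lemma zpow_apply_mem_span {N : ℕ} (hN : 0 < N) {a : M}
    (ha : (T ^ N) a = a) (m : ℤ) :
    (T ^ m) a ∈ span R (range fun k : Fin N => (T ^ (k : ℕ)) a) := by
  rw [zpow_apply_eq_of_modEq ha (Int.mod_modEq m N).symm]
  obtain ⟨k, hk⟩ := Int.eq_ofNat_of_zero_le (Int.emod_nonneg m (by omega : (N : ℤ) ≠ 0))
  have hkN : k < N := by have := Int.emod_lt_of_pos m (by omega : (0 : ℤ) < N); omega
  exact subset_span ⟨⟨k, hkN⟩, by simp [hk]⟩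

lemma zpow_apply_mem_span_of_mem {N : ℕ} (hN : 0 < N) {a : M}
    (ha : (T ^ N) a = a) (m : ℤ) {x : M}
    (hx : x ∈ span R (range fun k : Fin N => (T ^ (k : ℕ)) a)) :
    (T ^ m) x ∈ span R (range fun k : Fin N => (T ^ (k : ℕ)) a) := by
  set A := span R (range fun k : Fin N => (T ^ (k : ℕ)) a)
  have hinv : A ≤ A.comap ((T ^ m : M ≃L[R] M) : M →ₗ[R] M) := by
    refine span_le.mpr ?_
    rintro - ⟨k, rfl⟩
    change (T ^ m) ((T ^ (k : ℕ)) a) ∈ A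
    rw [← zpow_natCast, ← T.zpow_add_apply]
    exact zpow_apply_mem_span hN ha _
  exact hinv hx

lemma pow_apply_eq_self_of_mem_span {N : ℕ} {a : M}
    (ha : (T ^ N) a = a) {x : M}
    (hx : x ∈ span R (range fun k : Fin N => (T ^ (k : ℕ)) a)) : (T ^ N) x = x := by
  refine LinearMap.eqOn_span (f := ((T ^ N : M ≃L[R] M) : M →ₗ[R] M)) (g := LinearMap.id) ?_ hx
  rintro - ⟨k, rfl⟩
  show (T ^ N * T ^ (k : ℕ)) a = (T ^ (k : ℕ)) a
  rw [← pow_mul_comm]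
  exact congrArg (T ^ (k : ℕ)) ha

end ContinuousLinearEquiv

section Sampling

variable {H : Type*} [NormedAddCommGroup H] [InnerProductSpace ℂ H] {T S : H ≃L[ℂ] H}

lemma inner_zpow_apply_left_of_adjoint (hS : ∀ x y : H, ⟪T x, y⟫ = ⟪x, S y⟫) (m : ℤ)
    (x y : H) : ⟪(S ^ m) y, x⟫ = ⟪y, (T ^ m) x⟫ := by
  have hS' : ∀ x y : H, ⟪S y, x⟫ = ⟪y, T x⟫ := fun x y => by
    rw [← inner_conj_symm, ← hS, inner_conj_symm]
  have hSinv : ∀ x y : H, ⟪S⁻¹ y, x⟫ = ⟪y, T⁻¹ x⟫ := fun x y => by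
    have h := hS' (T.symm x) (S.symm y)
    rwa [S.apply_symm_apply, T.apply_symm_apply, eq_comm] at h
  induction m using Int.induction_on generalizing y with
  | zero => rfl
  | succ n ih =>
    rw [S.zpow_add_apply, zpow_one, ih, hS', add_comm, T.zpow_add_apply, zpow_one]
  | pred n ih =>
    rw [sub_eq_add_neg, S.zpow_add_apply, zpow_neg_one, ih, hSinv, add_comm, T.zpow_add_apply,
      zpow_neg_one]

lemma Fin.intCast_val_sub_modEq {n : ℕ} (a b : Fin n) :
    ((a - b : Fin n) : ℤ) ≡ a - b [ZMOD n] := by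
  rw [Fin.val_sub, Int.natCast_mod, Nat.cast_add, Nat.cast_sub b.is_le']
  exact (Int.mod_modEq _ _).trans (Int.modEq_iff_dvd.mpr ⟨-1, by ring⟩)

variable {r ℓ : ℕ}

/-- The paper's sampling functional `x ↦ L_j x(rn)` for `p = (j, n)`. -/
noncomputable def samplingFunctional (S : H ≃L[ℂ] H) (b : Fin r → H) (p : Fin r × Fin ℓ) :
    H →ₗ[ℂ] ℂ :=
  innerₛₗ ℂ ((S ^ (-((r : ℤ) * (p.2 : ℤ)))) (b p.1))

lemma samplingFunctional_pow_apply (hS : ∀ x y : H, ⟪T x, y⟫ = ⟪x, S y⟫) (b : Fin r → H)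
    {N : ℕ} {a : H} (ha : (T ^ N) a = a) (p : Fin r × Fin ℓ) (k : ℕ) :
    samplingFunctional S b p ((T ^ k) a) = ⟪b p.1, (T ^ ((N : ℤ) + k - r * p.2)) a⟫ := by
  rw [samplingFunctional, innerₛₗ_apply_apply, inner_zpow_apply_left_of_adjoint hS,
    ← zpow_natCast, ← T.zpow_add_apply]
  exact congrArg _ (T.zpow_apply_eq_of_modEq ha (Int.modEq_iff_dvd.mpr ⟨1, by ring⟩))

lemma samplingFunctional_zpow_apply (hS : ∀ x y : H, ⟪T x, y⟫ = ⟪x, S y⟫) (b : Fin r → H)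
    {y : H} (hy : (T ^ (r * ℓ)) y = y) (p : Fin r × Fin ℓ) (n : Fin ℓ) :
    samplingFunctional S b p ((T ^ ((r : ℤ) * (n : ℤ))) y) =
      samplingFunctional S b (p.1, p.2 - n) y := by
  simp only [samplingFunctional, innerₛₗ_apply_apply]
  rw [inner_zpow_apply_left_of_adjoint hS, inner_zpow_apply_left_of_adjoint hS,
    ← T.zpow_add_apply]
  refine congrArg _ (T.zpow_apply_eq_of_modEq hy ?_)
  push_cast
  convert ((Fin.intCast_val_sub_modEq p.2 n).mul_left' (c := (r : ℤ))).neg.symm using 1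
  ring

lemma zpow_apply_biorthogonalFamily [NeZero ℓ] (hS : ∀ x y : H, ⟪T x, y⟫ = ⟪x, S y⟫)
    (b : Fin r → H) {N : ℕ} (hN : 0 < N) (hrl : N = r * ℓ) {a : H} (ha : (T ^ N) a = a)
    {R : Matrix (Fin r × Fin ℓ) (Fin N) ℂ} {Q : Matrix (Fin N) (Fin r × Fin ℓ) ℂ}
    (hR : ∀ p (k : Fin N), samplingFunctional S b p ((T ^ (k : ℕ)) a) = R p k)
    (hRQ : R * Q = 1) (hQR : Q * R = 1) (j : Fin r) (n : Fin ℓ) :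
    (T ^ ((r : ℤ) * (n : ℤ))) (biorthogonalFamily (fun k : Fin N => (T ^ (k : ℕ)) a) Q (j, 0)) =
      biorthogonalFamily (fun k : Fin N => (T ^ (k : ℕ)) a) Q (j, n) := by
  set d := biorthogonalFamily (fun k : Fin N => (T ^ (k : ℕ)) a) Q
  have hmem : ∀ p, d p ∈ span ℂ (range fun k : Fin N => (T ^ (k : ℕ)) a) :=
    biorthogonalFamily_mem_span
  have hper : (T ^ (r * ℓ)) (d (j, 0)) = d (j, 0) := by
    rw [← hrl]; exact T.pow_apply_eq_self_of_mem_span ha (hmem (j, 0))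
  refine eq_of_forall_apply_eq hR hQR (T.zpow_apply_mem_span_of_mem hN ha _ (hmem _)) (hmem _)
    fun p => ?_
  rw [samplingFunctional_zpow_apply hS b hper, apply_biorthogonalFamily hR hRQ,
    apply_biorthogonalFamily hR hRQ]
  simp [Prod.ext_iff, sub_eq_zero]

end Sampling

theorem stmt_15_general {H : Type*} [NormedAddCommGroup H] [InnerProductSpace ℂ H]
    (T S : H ≃L[ℂ] H)
    (hS : ∀ x y : H, ⟪T x, y⟫ = ⟪x, S y⟫)
    (N r ℓ : ℕ) (hN : 0 < N) (hl : 0 < ℓ) (hrl : N = r * ℓ)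
    (a : H) (b : Fin r → H)
    (hTN : (T ^ N) a = a) :
    let rab : Fin r → ℤ → ℂ := fun j k => ⟪b j, (T ^ k) a⟫
    let R : Matrix (Fin r × Fin ℓ) (Fin N) ℂ :=
      Matrix.of fun p k => rab p.1 ((N : ℤ) + (k : ℤ) - (r : ℤ) * (p.2 : ℤ))
    let Aa := Submodule.span ℂ (Set.range fun k : Fin N => (T ^ (k : ℕ)) a)
    let L : H → Fin r → Fin ℓ → ℂ :=
      fun x j n => ⟪(S ^ (-((r : ℤ) * (n : ℤ)))) (b j), x⟫
    -- `P c`: the `c_j` lie in `𝒜_a`, `{T^{rn} c_j}` is a basis of `𝒜_a`,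
    -- and the sampling expansion holds
    let P : (Fin r → H) → Prop := fun c =>
      (∀ j, c j ∈ Aa) ∧
      LinearIndependent ℂ
        (fun p : Fin r × Fin ℓ => (T ^ ((r : ℤ) * (p.2 : ℤ))) (c p.1)) ∧
      Submodule.span ℂ
        (Set.range fun p : Fin r × Fin ℓ => (T ^ ((r : ℤ) * (p.2 : ℤ))) (c p.1)) = Aa ∧
      ∀ x ∈ Aa, x = ∑ j : Fin r, ∑ n : Fin ℓ, L x j n • (T ^ ((r : ℤ) * (n : ℤ))) (c j)
    -- if `ℝ_{a,b}` is invertible ...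
    (∃ Q : Matrix (Fin N) (Fin r × Fin ℓ) ℂ, R * Q = 1 ∧ Q * R = 1) →
      ∃ c : Fin r → H, P c ∧ (∀ c', P c' → c' = c) ∧
        ∀ (j j' : Fin r) (n : Fin ℓ),
          L (c j) j' n = if j = j' ∧ n = ⟨0, hl⟩ then 1 else 0 := by
  intro rab R Aa L P ⟨Q, hRQ, hQR⟩
  have : NeZero ℓ := ⟨hl.ne'⟩
  have hR : ∀ p (k : Fin N), samplingFunctional S b p ((T ^ (k : ℕ)) a) = R p k :=
    fun p k => samplingFunctional_pow_apply hS b hTN p k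
  set d := biorthogonalFamily (fun k : Fin N => (T ^ (k : ℕ)) a) Q
  have hshift : ∀ j (n : Fin ℓ), (T ^ ((r : ℤ) * (n : ℤ))) (d (j, 0)) = d (j, n) :=
    zpow_apply_biorthogonalFamily hS b hN hrl hTN hR hRQ hQR
  have hfam : (fun p : Fin r × Fin ℓ => (T ^ ((r : ℤ) * (p.2 : ℤ))) (d (p.1, 0))) = d :=
    funext fun p => hshift p.1 p.2
  refine ⟨fun j => d (j, 0), ⟨fun j => biorthogonalFamily_mem_span _, ?_, ?_, ?_⟩, ?_, ?_⟩
  · rw [hfam]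
    exact linearIndependent_of_apply_eq_ite (apply_biorthogonalFamily hR hRQ)
  · rw [hfam]
    exact span_range_biorthogonalFamily hR hQR
  · intro x hx
    calc x = ∑ p, samplingFunctional S b p x • d p := eq_sum_apply_smul_biorthogonalFamily hR hQR hx
      _ = _ := by rw [Fintype.sum_prod_type]; simp only [hshift]; rfl
  · rintro c' ⟨-, hli, hspan, hexp⟩
    have hc' := eq_biorthogonalFamily hR hQR (fun p => hspan.le (subset_span ⟨p, rfl⟩))
      hli fun x hx => by rw [Fintype.sum_prod_type]; exact hexp x hx
    funext j
    have hj := congrFun hc' (j, 0)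
    simp only [Fin.val_zero, Nat.cast_zero, mul_zero, zpow_zero] at hj
    exact hj
  · intro j j' n
    exact (apply_biorthogonalFamily hR hRQ (j', n) (j, 0)).trans
      (if_congr (by simp [Prod.ext_iff, eq_comm]) rfl rfl)

/-- Critical case `s = r` (so `sℓ = N`) of the cyclic
single-generator setting: if the `N×N` matrix `ℝ_{a,b}` is invertible then there exist
unique `c_j ∈ 𝒜_a`, `j = 1,…,r`, such that `{T^{rn} c_j}_{j=1..r, n=0..ℓ−1}` is a basis
of `𝒜_a`, the sampling expansion `x = ∑_j ∑_n 𝓛_j x(rn) T^{rn} c_j` holds on `𝒜_a`,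
and the interpolation property `𝓛_{j'} c_j(rn) = δ_{j,j'} δ_{n,0}` holds.
(The paper's inner product `⟨u,v⟩`, linear in the first slot, is Mathlib's `⟪v,u⟫_ℂ`;
`S` denotes the adjoint `T*`.) -/
theorem stmt_15 {H : Type*} [NormedAddCommGroup H] [InnerProductSpace ℂ H] [CompleteSpace H]
    (T S : H ≃L[ℂ] H)
    (hS : ∀ x y : H, ⟪T x, y⟫ = ⟪x, S y⟫)
    (N r ℓ : ℕ) (hN : 0 < N) (hr : 0 < r) (hl : 0 < ℓ) (hrl : N = r * ℓ)
    (a : H) (b : Fin r → H)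
    (hTN : (T ^ N) a = a)
    (hind : LinearIndependent ℂ fun k : Fin N => (T ^ (k : ℕ)) a) :
    let rab : Fin r → ℤ → ℂ := fun j k => ⟪b j, (T ^ k) a⟫
    let R : Matrix (Fin r × Fin ℓ) (Fin N) ℂ :=
      Matrix.of fun p k => rab p.1 ((N : ℤ) + (k : ℤ) - (r : ℤ) * (p.2 : ℤ))
    let Aa := Submodule.span ℂ (Set.range fun k : Fin N => (T ^ (k : ℕ)) a)
    let L : H → Fin r → Fin ℓ → ℂ :=
      fun x j n => ⟪(S ^ (-((r : ℤ) * (n : ℤ)))) (b j), x⟫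
    -- `P c`: the `c_j` lie in `𝒜_a`, `{T^{rn} c_j}` is a basis of `𝒜_a`,
    -- and the sampling expansion holds
    let P : (Fin r → H) → Prop := fun c =>
      (∀ j, c j ∈ Aa) ∧
      LinearIndependent ℂ
        (fun p : Fin r × Fin ℓ => (T ^ ((r : ℤ) * (p.2 : ℤ))) (c p.1)) ∧
      Submodule.span ℂ
        (Set.range fun p : Fin r × Fin ℓ => (T ^ ((r : ℤ) * (p.2 : ℤ))) (c p.1)) = Aa ∧
      ∀ x ∈ Aa, x = ∑ j : Fin r, ∑ n : Fin ℓ, L x j n • (T ^ ((r : ℤ) * (n : ℤ))) (c j)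
    -- if `ℝ_{a,b}` is invertible ...
    (∃ Q : Matrix (Fin N) (Fin r × Fin ℓ) ℂ, R * Q = 1 ∧ Q * R = 1) →
      ∃ c : Fin r → H, P c ∧ (∀ c', P c' → c' = c) ∧
        ∀ (j j' : Fin r) (n : Fin ℓ),
          L (c j) j' n = if j = j' ∧ n = ⟨0, hl⟩ then 1 else 0 :=
  stmt_15_general T S hS N r ℓ hN hl hrl a b hTN
end
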